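/- Let r > 0, let D be the open disk of radius r centered at (φ_c, ψ_c), and let q be of class C² on an open set containing cl D, satisfying (⋆) in D, with 0 < q < c_* in D. Let P = (φ₀, ψ₀) be a point of the boundary circle ∂D with q(P) = c_*, and suppose that the direction from the center to P is not parallel to the φ-axis, i.e. ψ₀ ≠ ψ_c. Then for every unit vector μ forming an acute angle with the direction from the center to P (i.e. μ · (P − (φ_c,ψ_c)) > 0), the directional derivative of q at P along μ is strictly positive: ∂q/∂μ(P) > 0. -/

import Mathlib

open Real Set MeasureTheory Filter

noncomputable section

/-- The density function `ρ(t) = (1 − ((γ−1)/2) t)^{1/(γ−1)}`. -/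
def rhoF (γ t : ℝ) : ℝ := (1 - (γ - 1) / 2 * t) ^ ((1 : ℝ) / (γ - 1))

/-- The critical (sonic) speed `c_* = (2/(γ+1))^{1/2}`. -/
def cstar (γ : ℝ) : ℝ := Real.sqrt (2 / (γ + 1))

/-- The maximal speed `q_max = (2/(γ−1))^{1/2}`. -/
def qmaxF (γ : ℝ) : ℝ := Real.sqrt (2 / (γ - 1))

/-- `A(q) = ∫_{c_*}^q (ρ(s²)+2s²ρ'(s²))/(s ρ(s²)²) ds`. -/
def Afun (γ q : ℝ) : ℝ :=
  ∫ s in (cstar γ)..q,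
    (rhoF γ (s ^ 2) + 2 * s ^ 2 * deriv (rhoF γ) (s ^ 2)) / (s * (rhoF γ (s ^ 2)) ^ 2)

/-- `B(q) = ∫_{c_*}^q ρ(s²)/s ds`. -/
def Bfun (γ q : ℝ) : ℝ := ∫ s in (cstar γ)..q, rhoF γ (s ^ 2) / s

/-- Inverse of `A` restricted to `[c_*, q_max)`. -/
def AplusInv (γ : ℝ) : ℝ → ℝ := Function.invFunOn (Afun γ) (Ico (cstar γ) (qmaxF γ))

/-- `K(s) = B(A₊⁻¹(s))`. -/
def Kfun (γ s : ℝ) : ℝ := Bfun γ (AplusInv γ s)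

/-- `b(s) = −K'(s)`. -/
def bfun (γ s : ℝ) : ℝ := -deriv (Kfun γ) s

/-- `p(s) = −K''(s)`. -/
def pfun (γ s : ℝ) : ℝ := -deriv (deriv (Kfun γ)) s

/-- Partial derivative in the first (potential) variable. -/
def pdx (u : ℝ × ℝ → ℝ) (p : ℝ × ℝ) : ℝ := deriv (fun x => u (x, p.2)) p.1

/-- Partial derivative in the second (stream) variable. -/
def pdy (u : ℝ × ℝ → ℝ) (p : ℝ × ℝ) : ℝ := deriv (fun y => u (p.1, y)) p.2

/-- The Chaplygin equation (⋆) at a point. -/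
def chap (γ : ℝ) (q : ℝ × ℝ → ℝ) (p : ℝ × ℝ) : Prop :=
  pdx (pdx fun z => Afun γ (q z)) p + pdy (pdy fun z => Bfun γ (q z)) p = 0

/-- The open Euclidean disk of radius `r` centred at `c`. -/
def diskC (c : ℝ × ℝ) (r : ℝ) : Set (ℝ × ℝ) :=
  {p | (p.1 - c.1) ^ 2 + (p.2 - c.2) ^ 2 < r ^ 2}

/-!
Let `o` be the midpoint of the centre and `P`: the disk of radius `r / 2` about `o` lies in the
subsonic disk and touches its boundary only at `P`. Work on the annulus `r / 4 ≤ |p - o| ≤ r / 2`.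
Expanded, (⋆) reads `A'(q) q_φφ + A''(q) q_φ² + B'(q) q_ψψ + B''(q) q_ψ² = 0`, where `B' > 0` but
`A'(q)` degenerates exactly at the sonic speed. Because `ψ₀ ≠ ψ_c`, the points of the annulus near
the line `ψ = o.2` stay away from `P`, so `A'(q)` is bounded below there, while elsewhere
`(ψ - o.2)²` is; hence `A'(q) X² + B'(q) Y² ≥ κ > 0` on the annulus, where `(X, Y) = p - o`.
This is what Hopf's barrier `w = e^{-α|p-o|²} - e^{-α(r/2)²}` needs: for `α` large and `ε` small,
`q + ε w` has no interior maximum, so `q + ε w ≤ c_*` on the annulus with equality at `P`.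
Differentiating at `P` along `μ` gives `∂q/∂μ(P) ≥ 2αε e^{-α(r/2)²} μ · (P - o) > 0`.
-/

open Topology

section OneVariable

variable {f g : ℝ → ℝ} {x : ℝ}

lemma IsLocalMax.deriv_deriv_nonpos (h : IsLocalMax f x) (hf : ContinuousAt f x) :
    deriv (deriv f) x ≤ 0 := by
  by_contra! hpos
  -- by the second-derivative test `x` is also a local minimum, so `f` is locally constant
  have hconst : f =ᶠ[𝓝 x] fun _ => f x :=
    ((isLocalMin_of_deriv_deriv_pos hpos h.deriv_eq_zero hf).and h).mono
      fun y hy => le_antisymm hy.2 hy.1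
  have h0 := hconst.deriv.deriv_eq
  simp only [deriv_const'] at h0
  simp [h0] at hpos

lemma deriv_deriv_add (hf : ContDiffAt ℝ 2 f x) (hg : ContDiffAt ℝ 2 g x) :
    deriv (deriv (f + g)) x = deriv (deriv f) x + deriv (deriv g) x := by
  have hev : deriv (f + g) =ᶠ[𝓝 x] deriv f + deriv g := by
    filter_upwards [hf.eventually (by norm_num), hg.eventually (by norm_num)] with y hfy hgy
    exact deriv_add (hfy.differentiableAt (by norm_num)) (hgy.differentiableAt (by norm_num))
  rw [hev.deriv_eq, deriv_add ((hf.derivWithin (m := 1) (by norm_num)).differentiableAt one_ne_zero)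
    ((hg.derivWithin (m := 1) (by norm_num)).differentiableAt one_ne_zero)]

lemma IsLocalMax.deriv_add_eq_zero_and_deriv_deriv_add_nonpos (h : IsLocalMax (f + g) x)
    (hf : ContDiffAt ℝ 2 f x) (hg : ContDiffAt ℝ 2 g x) :
    deriv f x + deriv g x = 0 ∧ deriv (deriv f) x + deriv (deriv g) x ≤ 0 := by
  rw [← deriv_add (hf.differentiableAt (by norm_num)) (hg.differentiableAt (by norm_num)),
    ← deriv_deriv_add hf hg]
  exact ⟨h.deriv_eq_zero, h.deriv_deriv_nonpos (hf.continuousAt.add hg.continuousAt)⟩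

lemma deriv_deriv_comp {F F' : ℝ → ℝ} {I : Set ℝ} (hI : IsOpen I)
    (hF : ∀ s ∈ I, HasDerivAt F (F' s) s) (hF' : DifferentiableAt ℝ F' (g x))
    (hg : ContDiffAt ℝ 2 g x) (hgx : g x ∈ I) :
    deriv (deriv fun y => F (g y)) x
      = deriv F' (g x) * deriv g x ^ 2 + F' (g x) * deriv (deriv g) x := by
  have hev : deriv (fun y => F (g y)) =ᶠ[𝓝 x] fun y => F' (g y) * deriv g y := by
    filter_upwards [hg.continuousAt.preimage_mem_nhds (hI.mem_nhds hgx),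
      hg.eventually (by norm_num)] with y hy hgy
    exact ((hF _ hy).comp y (hgy.differentiableAt (by norm_num)).hasDerivAt).deriv
  rw [hev.deriv_eq]
  have hg' := (hg.derivWithin (m := 1) (by norm_num)).differentiableAt one_ne_zero
  refine ((hF'.hasDerivAt.comp x (hg.differentiableAt (by norm_num)).hasDerivAt).mul
    hg'.hasDerivAt).deriv.trans ?_
  simp only [Function.comp_apply]
  ring

lemma HasDerivAt.nonneg_of_eventually_le_left {f' : ℝ} (hf : HasDerivAt f f' x)
    (hle : ∀ᶠ t in 𝓝[<] x, f t ≤ f x) : 0 ≤ f' := by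
  refine ge_of_tendsto ((hasDerivAt_iff_tendsto_slope.1 hf).mono_left (nhdsLT_le_nhdsNE x)) ?_
  filter_upwards [hle, self_mem_nhdsWithin] with t ht htx
  rw [slope_def_field]
  exact div_nonneg_of_nonpos (sub_nonpos.2 ht) (sub_nonpos.2 htx.le)

lemma hasDerivAt_intervalIntegral_of_continuousOn {I : Set ℝ} {a : ℝ}
    (hI : IsOpen I) (hIc : I.OrdConnected) (hf : ContinuousOn f I) (ha : a ∈ I) (hx : x ∈ I) :
    HasDerivAt (fun y => ∫ t in a..y, f t) (f x) x :=
  intervalIntegral.integral_hasDerivAt_right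
    ((hf.mono (hIc.uIcc_subset ha hx)).intervalIntegrable)
    (hf.stronglyMeasurableAtFilter hI x hx) (hf.continuousAt (hI.mem_nhds hx))

end OneVariable

section PartialDerivatives

variable {u w : ℝ × ℝ → ℝ} {z : ℝ × ℝ}

lemma ContDiffAt.comp_prodMk_left {n : WithTop ℕ∞} (hu : ContDiffAt ℝ n u z) :
    ContDiffAt ℝ n (fun x => u (x, z.2)) z.1 :=
  hu.comp (f := fun x : ℝ => (x, z.2)) z.1 (by fun_prop)

lemma ContDiffAt.comp_prodMk_right {n : WithTop ℕ∞} (hu : ContDiffAt ℝ n u z) :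
    ContDiffAt ℝ n (fun y => u (z.1, y)) z.2 :=
  hu.comp (f := fun y : ℝ => (z.1, y)) z.2 (by fun_prop)

lemma pdx_eq_fderiv (hu : DifferentiableAt ℝ u z) : pdx u z = fderiv ℝ u z (1, 0) :=
  (hu.hasFDerivAt.comp_hasDerivAt (f := fun x : ℝ => (x, z.2)) z.1
    ((hasDerivAt_id z.1).prodMk (hasDerivAt_const z.1 z.2))).deriv

lemma pdy_eq_fderiv (hu : DifferentiableAt ℝ u z) : pdy u z = fderiv ℝ u z (0, 1) :=
  (hu.hasFDerivAt.comp_hasDerivAt (f := fun y : ℝ => (z.1, y)) z.2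
    ((hasDerivAt_const z.2 z.1).prodMk (hasDerivAt_id z.2))).deriv

lemma hasDerivAt_comp_add_smul (hu : DifferentiableAt ℝ u z) (μ : ℝ × ℝ) :
    HasDerivAt (fun t : ℝ => u (z + t • μ)) (μ.1 * pdx u z + μ.2 * pdy u z) 0 := by
  have hline : HasDerivAt (fun t : ℝ => z + t • μ) μ 0 := by
    simpa using ((hasDerivAt_id (0 : ℝ)).smul_const μ).const_add z
  have hu' : HasFDerivAt u (fderiv ℝ u z) (z + (0 : ℝ) • μ) := by
    simpa using hu.hasFDerivAt
  have h : HasDerivAt (fun t : ℝ => u (z + t • μ)) (fderiv ℝ u z μ) 0 := hu'.comp_hasDerivAt 0 hline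
  convert h using 1
  rw [pdx_eq_fderiv hu, pdy_eq_fderiv hu, ← smul_eq_mul, ← smul_eq_mul, ← map_smul, ← map_smul,
    ← map_add]
  congr 1
  ext <;> simp

lemma pdx_pdx_comp {F F' : ℝ → ℝ} {I : Set ℝ} (hI : IsOpen I)
    (hF : ∀ s ∈ I, HasDerivAt F (F' s) s) (hF' : DifferentiableAt ℝ F' (u z))
    (hu : ContDiffAt ℝ 2 u z) (huz : u z ∈ I) :
    pdx (pdx fun p => F (u p)) z = deriv F' (u z) * pdx u z ^ 2 + F' (u z) * pdx (pdx u) z :=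
  deriv_deriv_comp hI hF hF' hu.comp_prodMk_left huz

lemma pdy_pdy_comp {F F' : ℝ → ℝ} {I : Set ℝ} (hI : IsOpen I)
    (hF : ∀ s ∈ I, HasDerivAt F (F' s) s) (hF' : DifferentiableAt ℝ F' (u z))
    (hu : ContDiffAt ℝ 2 u z) (huz : u z ∈ I) :
    pdy (pdy fun p => F (u p)) z = deriv F' (u z) * pdy u z ^ 2 + F' (u z) * pdy (pdy u) z :=
  deriv_deriv_comp hI hF hF' hu.comp_prodMk_right huz

lemma pdx_const_mul (c : ℝ) (u : ℝ × ℝ → ℝ) : pdx (fun p => c * u p) = fun p => c * pdx u p :=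
  funext fun p => congrFun (deriv_const_mul_field' (v := fun x => u (x, p.2)) c) p.1

lemma pdy_const_mul (c : ℝ) (u : ℝ × ℝ → ℝ) : pdy (fun p => c * u p) = fun p => c * pdy u p :=
  funext fun p => congrFun (deriv_const_mul_field' (v := fun y => u (p.1, y)) c) p.2

lemma IsLocalMax.pdx_add_eq_zero_and_pdx_pdx_add_nonpos
    (h : IsLocalMax (fun p => u p + w p) z) (hu : ContDiffAt ℝ 2 u z) (hw : ContDiffAt ℝ 2 w z) :
    pdx u z + pdx w z = 0 ∧ pdx (pdx u) z + pdx (pdx w) z ≤ 0 :=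
  (h.comp_continuous (g := fun x : ℝ => (x, z.2)) (by fun_prop))
    |>.deriv_add_eq_zero_and_deriv_deriv_add_nonpos hu.comp_prodMk_left hw.comp_prodMk_left

lemma IsLocalMax.pdy_add_eq_zero_and_pdy_pdy_add_nonpos
    (h : IsLocalMax (fun p => u p + w p) z) (hu : ContDiffAt ℝ 2 u z) (hw : ContDiffAt ℝ 2 w z) :
    pdy u z + pdy w z = 0 ∧ pdy (pdy u) z + pdy (pdy w) z ≤ 0 :=
  (h.comp_continuous (g := fun y : ℝ => (z.1, y)) (by fun_prop))
    |>.deriv_add_eq_zero_and_deriv_deriv_add_nonpos hu.comp_prodMk_right hw.comp_prodMk_right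

end PartialDerivatives

def dAfun (γ s : ℝ) : ℝ :=
  (1 - (γ + 1) / 2 * s ^ 2) / (s * (1 - (γ - 1) / 2 * s ^ 2) * rhoF γ (s ^ 2))

def dBfun (γ s : ℝ) : ℝ := rhoF γ (s ^ 2) / s

section GasDynamics

variable {γ : ℝ}

lemma cstar_sq (hγ : 1 < γ) : cstar γ ^ 2 = 2 / (γ + 1) :=
  sq_sqrt (by positivity)

lemma cstar_pos (hγ : 1 < γ) : 0 < cstar γ :=
  sqrt_pos.2 (by positivity)

lemma cstar_lt_qmaxF (hγ : 1 < γ) : cstar γ < qmaxF γ :=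
  sqrt_lt_sqrt (by positivity) (div_lt_div_of_pos_left two_pos (by linarith) (by linarith))

lemma one_sub_mul_sq_pos {s : ℝ} (hγ : 1 < γ) (hs : s ∈ Ioo 0 (qmaxF γ)) :
    0 < 1 - (γ - 1) / 2 * s ^ 2 := by
  have hs2 : s ^ 2 < 2 / (γ - 1) := by
    rw [← sq_sqrt (div_nonneg zero_le_two (by linarith : (0 : ℝ) ≤ γ - 1))]
    exact pow_lt_pow_left₀ hs.2 hs.1.le two_ne_zero
  rw [lt_div_iff₀ (by linarith)] at hs2
  nlinarith

lemma rhoF_pos {t : ℝ} (ht : 0 < 1 - (γ - 1) / 2 * t) : 0 < rhoF γ t :=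
  rpow_pos_of_pos ht _

lemma contDiffAt_rhoF {n : WithTop ℕ∞} {t : ℝ} (ht : 0 < 1 - (γ - 1) / 2 * t) :
    ContDiffAt ℝ n (rhoF γ) t :=
  (contDiffAt_rpow_const_of_ne ht.ne').comp (f := fun t => 1 - (γ - 1) / 2 * t) t (by fun_prop)

lemma hasDerivAt_rhoF {t : ℝ} (hγ : 1 < γ) (ht : 0 < 1 - (γ - 1) / 2 * t) :
    HasDerivAt (rhoF γ) (-rhoF γ t / (2 * (1 - (γ - 1) / 2 * t))) t := by
  have h := ((hasDerivAt_id t).const_mul ((γ - 1) / 2)).const_sub 1 |>.rpow_const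
    (p := 1 / (γ - 1)) (Or.inl ht.ne')
  convert h using 1
  · rfl
  · rw [rhoF, id, rpow_sub_one ht.ne']
    field_simp [show γ - 1 ≠ 0 by linarith]

lemma Afun_integrand_eq {s : ℝ} (hγ : 1 < γ) (hs : s ∈ Ioo 0 (qmaxF γ)) :
    (rhoF γ (s ^ 2) + 2 * s ^ 2 * deriv (rhoF γ) (s ^ 2)) / (s * rhoF γ (s ^ 2) ^ 2)
      = dAfun γ s := by
  have hb := one_sub_mul_sq_pos hγ hs
  rw [(hasDerivAt_rhoF hγ hb).deriv, dAfun]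
  have := rhoF_pos hb
  have := hs.1
  rw [show 1 - (γ + 1) / 2 * s ^ 2 = (1 - (γ - 1) / 2 * s ^ 2) - s ^ 2 by ring]
  generalize 1 - (γ - 1) / 2 * s ^ 2 = b at hb ⊢
  field_simp
  ring

lemma contDiffOn_dAfun (hγ : 1 < γ) : ContDiffOn ℝ 1 (dAfun γ) (Ioo 0 (qmaxF γ)) := by
  intro s hs
  have hb := one_sub_mul_sq_pos hγ hs
  have hρ : ContDiffAt ℝ 1 (fun s => rhoF γ (s ^ 2)) s :=
    (contDiffAt_rhoF hb).comp (f := fun s : ℝ => s ^ 2) s (by fun_prop)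
  have := rhoF_pos hb
  have := hs.1
  exact (ContDiffAt.div (by fun_prop) ((by fun_prop : ContDiffAt ℝ 1
    (fun s : ℝ => s * (1 - (γ - 1) / 2 * s ^ 2)) s).mul hρ) (by positivity)).contDiffWithinAt

lemma contDiffOn_dBfun (hγ : 1 < γ) : ContDiffOn ℝ 1 (dBfun γ) (Ioo 0 (qmaxF γ)) := by
  intro s hs
  have hρ : ContDiffAt ℝ 1 (fun s => rhoF γ (s ^ 2)) s :=
    (contDiffAt_rhoF (one_sub_mul_sq_pos hγ hs)).comp (f := fun s : ℝ => s ^ 2) s (by fun_prop)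
  exact (hρ.div contDiffAt_id hs.1.ne').contDiffWithinAt

lemma dAfun_pos {s : ℝ} (hγ : 1 < γ) (hs : s ∈ Ioo 0 (cstar γ)) : 0 < dAfun γ s := by
  have hb := one_sub_mul_sq_pos hγ ⟨hs.1, hs.2.trans (cstar_lt_qmaxF hγ)⟩
  have hs2 : s ^ 2 < 2 / (γ + 1) := by
    rw [← cstar_sq hγ]; exact pow_lt_pow_left₀ hs.2 hs.1.le two_ne_zero
  rw [lt_div_iff₀ (by linarith)] at hs2
  have := rhoF_pos hb
  have := hs.1
  unfold dAfun
  apply div_pos (by nlinarith) (by positivity)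

lemma dBfun_pos {s : ℝ} (hγ : 1 < γ) (hs : s ∈ Ioo 0 (qmaxF γ)) : 0 < dBfun γ s :=
  div_pos (rhoF_pos (one_sub_mul_sq_pos hγ hs)) hs.1

lemma hasDerivAt_Afun {s : ℝ} (hγ : 1 < γ) (hs : s ∈ Ioo 0 (qmaxF γ)) :
    HasDerivAt (Afun γ) (dAfun γ s) s := by
  have hcont : ContinuousOn (fun s => (rhoF γ (s ^ 2) + 2 * s ^ 2 * deriv (rhoF γ) (s ^ 2)) /
      (s * rhoF γ (s ^ 2) ^ 2)) (Ioo 0 (qmaxF γ)) :=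
    (contDiffOn_dAfun hγ).continuousOn.congr fun s hs => Afun_integrand_eq hγ hs
  rw [← Afun_integrand_eq hγ hs]
  exact hasDerivAt_intervalIntegral_of_continuousOn isOpen_Ioo ordConnected_Ioo hcont
    ⟨cstar_pos hγ, cstar_lt_qmaxF hγ⟩ hs

lemma hasDerivAt_Bfun {s : ℝ} (hγ : 1 < γ) (hs : s ∈ Ioo 0 (qmaxF γ)) :
    HasDerivAt (Bfun γ) (dBfun γ s) s :=
  hasDerivAt_intervalIntegral_of_continuousOn isOpen_Ioo ordConnected_Ioo
    (contDiffOn_dBfun hγ).continuousOn ⟨cstar_pos hγ, cstar_lt_qmaxF hγ⟩ hs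

lemma chap_iff {q : ℝ × ℝ → ℝ} {p : ℝ × ℝ} (hγ : 1 < γ) (hq : ContDiffAt ℝ 2 q p)
    (hp : q p ∈ Ioo 0 (qmaxF γ)) :
    chap γ q p ↔ dAfun γ (q p) * pdx (pdx q) p + deriv (dAfun γ) (q p) * pdx q p ^ 2
      + dBfun γ (q p) * pdy (pdy q) p + deriv (dBfun γ) (q p) * pdy q p ^ 2 = 0 := by
  rw [chap, pdx_pdx_comp isOpen_Ioo (fun s hs => hasDerivAt_Afun hγ hs)
      (((contDiffOn_dAfun hγ).differentiableOn one_ne_zero).differentiableAt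
        (isOpen_Ioo.mem_nhds hp)) hq hp,
    pdy_pdy_comp isOpen_Ioo (fun s hs => hasDerivAt_Bfun hγ hs)
      (((contDiffOn_dBfun hγ).differentiableOn one_ne_zero).differentiableAt
        (isOpen_Ioo.mem_nhds hp)) hq hp]
  constructor <;> intro h <;> linarith

lemma exists_bounds_dAfun_dBfun {δ : ℝ} (hγ : 1 < γ) (hδ : 0 < δ) :
    ∃ Λ C β, 0 < β ∧ ∀ s ∈ Icc δ (cstar γ), dAfun γ s + dBfun γ s ≤ Λ ∧
      deriv (dAfun γ) s ≤ C ∧ deriv (dBfun γ) s ≤ C ∧ β ≤ dBfun γ s := by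
  have hI : Icc δ (cstar γ) ⊆ Ioo 0 (qmaxF γ) := fun s hs =>
    ⟨hδ.trans_le hs.1, hs.2.trans_lt (cstar_lt_qmaxF hγ)⟩
  have hA := (contDiffOn_dAfun hγ).continuousOn.mono hI
  have hB := (contDiffOn_dBfun hγ).continuousOn.mono hI
  obtain ⟨Λ, hΛ⟩ := (isCompact_Icc.image_of_continuousOn (hA.add hB)).bddAbove
  obtain ⟨C₁, hC₁⟩ := (isCompact_Icc.image_of_continuousOn (((contDiffOn_dAfun hγ)
    |>.continuousOn_deriv_of_isOpen isOpen_Ioo le_rfl).mono hI)).bddAbove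
  obtain ⟨C₂, hC₂⟩ := (isCompact_Icc.image_of_continuousOn (((contDiffOn_dBfun hγ)
    |>.continuousOn_deriv_of_isOpen isOpen_Ioo le_rfl).mono hI)).bddAbove
  obtain ⟨β, hβ, hβle⟩ := isCompact_Icc.exists_forall_le' hB fun s hs => dBfun_pos hγ (hI hs)
  exact ⟨Λ, max C₁ C₂, β, hβ, fun s hs => ⟨hΛ (mem_image_of_mem _ hs),
    (hC₁ (mem_image_of_mem _ hs)).trans (le_max_left _ _),
    (hC₂ (mem_image_of_mem _ hs)).trans (le_max_right _ _), hβle s hs⟩⟩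

lemma exists_pos_forall_le_dAfun {S : Set (ℝ × ℝ)} {q : ℝ × ℝ → ℝ} (hγ : 1 < γ)
    (hS : IsCompact S) (hq : ContinuousOn q S) (hsub : ∀ p ∈ S, 0 < q p ∧ q p < cstar γ) :
    ∃ l, 0 < l ∧ ∀ p ∈ S, l ≤ dAfun γ (q p) :=
  hS.exists_forall_le' ((contDiffOn_dAfun hγ).continuousOn.comp hq
    fun p hp => ⟨(hsub p hp).1, (hsub p hp).2.trans (cstar_lt_qmaxF hγ)⟩)
    fun p hp => dAfun_pos hγ (hsub p hp)

end GasDynamics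

def sqDist (o p : ℝ × ℝ) : ℝ := (p.1 - o.1) ^ 2 + (p.2 - o.2) ^ 2

def annulus (o : ℝ × ℝ) (ρ₀ ρ : ℝ) : Set (ℝ × ℝ) :=
  {p | ρ₀ ^ 2 ≤ sqDist o p ∧ sqDist o p ≤ ρ ^ 2}

def hopfBarrier (o : ℝ × ℝ) (α ρ : ℝ) (p : ℝ × ℝ) : ℝ :=
  exp (-α * sqDist o p) - exp (-α * ρ ^ 2)

section Annulus

variable {o p : ℝ × ℝ} {ρ₀ ρ α : ℝ}

lemma sqDist_nonneg (o p : ℝ × ℝ) : 0 ≤ sqDist o p := by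
  unfold sqDist; positivity

lemma sqDist_pos_of_ne (h : o ≠ p) : 0 < sqDist o p := by
  unfold sqDist
  by_contra! h'
  refine h (Prod.ext ?_ ?_)
  · nlinarith [sq_nonneg (p.1 - o.1), sq_nonneg (p.2 - o.2)]
  · nlinarith [sq_nonneg (p.1 - o.1), sq_nonneg (p.2 - o.2)]

lemma sqDist_add_sqDist_eq (c P p : ℝ × ℝ) :
    sqDist c p + sqDist P p = 2 * sqDist ((c.1 + P.1) / 2, (c.2 + P.2) / 2) p + sqDist c P / 2 := by
  unfold sqDist; ring

lemma hasDerivAt_sqDist_fst (o : ℝ × ℝ) (x y : ℝ) :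
    HasDerivAt (fun x => sqDist o (x, y)) (2 * (x - o.1)) x :=
  ((((hasDerivAt_id x).sub_const o.1).pow 2).add_const ((y - o.2) ^ 2)).congr_deriv (by simp)

lemma hasDerivAt_sqDist_snd (o : ℝ × ℝ) (x y : ℝ) :
    HasDerivAt (fun y => sqDist o (x, y)) (2 * (y - o.2)) y :=
  ((((hasDerivAt_id y).sub_const o.2).pow 2).const_add ((x - o.1) ^ 2)).congr_deriv (by simp)

lemma continuous_sqDist (o : ℝ × ℝ) : Continuous (sqDist o) := by
  unfold sqDist; fun_prop

lemma isCompact_annulus (o : ℝ × ℝ) (ρ₀ ρ : ℝ) : IsCompact (annulus o ρ₀ ρ) := by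
  refine Metric.isCompact_of_isClosed_isBounded
    ((isClosed_le continuous_const (continuous_sqDist o)).inter
      (isClosed_le (continuous_sqDist o) continuous_const))
    ((Metric.isBounded_closedBall (x := o) (r := |ρ|)).subset fun p hp => ?_)
  have hp2 : (p.1 - o.1) ^ 2 + (p.2 - o.2) ^ 2 ≤ ρ ^ 2 := hp.2
  have h1 : (p.1 - o.1) ^ 2 ≤ ρ ^ 2 := by nlinarith [sq_nonneg (p.2 - o.2)]
  have h2 : (p.2 - o.2) ^ 2 ≤ ρ ^ 2 := by nlinarith [sq_nonneg (p.1 - o.1)]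
  rw [Metric.mem_closedBall, Prod.dist_eq, Real.dist_eq, Real.dist_eq]
  exact max_le (sq_le_sq.1 h1) (sq_le_sq.1 h2)

lemma eventually_add_smul_mem_annulus {P μ : ℝ × ℝ} (hρ₀ : 0 ≤ ρ₀) (hρ : ρ₀ < ρ)
    (hP : sqDist o P = ρ ^ 2) (hμ : 0 < μ.1 * (P.1 - o.1) + μ.2 * (P.2 - o.2)) :
    ∀ᶠ t in 𝓝[<] (0 : ℝ), P + t • μ ∈ annulus o ρ₀ ρ := by
  have hdist : ∀ t : ℝ, sqDist o (P + t • μ)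
      = ρ ^ 2 + t * (2 * (μ.1 * (P.1 - o.1) + μ.2 * (P.2 - o.2)) + t * (μ.1 ^ 2 + μ.2 ^ 2)) := by
    intro t
    rw [← hP]
    simp only [sqDist, Prod.fst_add, Prod.snd_add, Prod.smul_fst, Prod.smul_snd, smul_eq_mul]
    ring
  have hinner : ∀ᶠ t in 𝓝 (0 : ℝ), ρ₀ ^ 2 < sqDist o (P + t • μ) :=
    continuousAt_const.eventually_lt ((continuous_sqDist o).comp (by fun_prop)).continuousAt
      (by simpa [hP] using pow_lt_pow_left₀ hρ hρ₀ two_ne_zero)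
  have hslope : ∀ᶠ t in 𝓝 (0 : ℝ),
      0 < 2 * (μ.1 * (P.1 - o.1) + μ.2 * (P.2 - o.2)) + t * (μ.1 ^ 2 + μ.2 ^ 2) :=
    continuousAt_const.eventually_lt (by fun_prop) (by simpa using hμ)
  filter_upwards [nhdsWithin_le_nhds hinner, nhdsWithin_le_nhds hslope, self_mem_nhdsWithin]
    with t h1 h2 (ht : t < 0)
  exact ⟨h1.le, by rw [hdist]; nlinarith⟩

lemma hopfBarrier_eq_zero (h : sqDist o p = ρ ^ 2) : hopfBarrier o α ρ p = 0 := by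
  rw [hopfBarrier, h, sub_self]

lemma hopfBarrier_le_one (hα : 0 ≤ α) : hopfBarrier o α ρ p ≤ 1 := by
  have : exp (-α * sqDist o p) ≤ 1 :=
    exp_le_one_iff.2 (by nlinarith [sqDist_nonneg o p])
  unfold hopfBarrier
  linarith [exp_pos (-α * ρ ^ 2)]

lemma contDiff_hopfBarrier {n : WithTop ℕ∞} : ContDiff ℝ n (hopfBarrier o α ρ) := by
  unfold hopfBarrier sqDist; fun_prop

lemma pdx_hopfBarrier :
    pdx (hopfBarrier o α ρ) = fun z => -(2 * α) * (z.1 - o.1) * exp (-α * sqDist o z) :=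
  funext fun z => ((((hasDerivAt_sqDist_fst o z.1 z.2).const_mul (-α)).exp.sub_const
    (exp (-α * ρ ^ 2))).congr_deriv (by ring)).deriv

lemma pdy_hopfBarrier :
    pdy (hopfBarrier o α ρ) = fun z => -(2 * α) * (z.2 - o.2) * exp (-α * sqDist o z) :=
  funext fun z => ((((hasDerivAt_sqDist_snd o z.1 z.2).const_mul (-α)).exp.sub_const
    (exp (-α * ρ ^ 2))).congr_deriv (by ring)).deriv

lemma pdx_pdx_hopfBarrier :
    pdx (pdx (hopfBarrier o α ρ)) p
      = (4 * α ^ 2 * (p.1 - o.1) ^ 2 - 2 * α) * exp (-α * sqDist o p) := by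
  rw [pdx_hopfBarrier]
  refine HasDerivAt.deriv (((((hasDerivAt_id p.1).sub_const o.1).const_mul (-(2 * α))).mul
    ((hasDerivAt_sqDist_fst o p.1 p.2).const_mul (-α)).exp).congr_deriv ?_)
  simp only [id]
  ring

lemma pdy_pdy_hopfBarrier :
    pdy (pdy (hopfBarrier o α ρ)) p
      = (4 * α ^ 2 * (p.2 - o.2) ^ 2 - 2 * α) * exp (-α * sqDist o p) := by
  rw [pdy_hopfBarrier]
  refine HasDerivAt.deriv (((((hasDerivAt_id p.2).sub_const o.2).const_mul (-(2 * α))).mul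
    ((hasDerivAt_sqDist_snd o p.1 p.2).const_mul (-α)).exp).congr_deriv ?_)
  simp only [id]
  ring

end Annulus

/-- At an interior maximum of `u + ε * hopfBarrier o α ρ`, with `X, Y` the coordinates relative
to `o` and `E = exp (-α * (X ^ 2 + Y ^ 2))`, the derivatives of `u` are those of the barrier up to
sign; for `α` large and `ε` small the equation then fails. -/
lemma hopf_barrier_operator_neg {a b c d C Λ κ α ε ρ X Y E ux uy uxx uyy : ℝ}
    (ha : 0 ≤ a) (hb : 0 ≤ b) (hab : a + b ≤ Λ) (hc : c ≤ C) (hd : d ≤ C)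
    (hκ : κ ≤ a * X ^ 2 + b * Y ^ 2) (hα : 0 < α) (hε : 0 < ε) (hC : 0 ≤ C)
    (hΛ : Λ < α * κ) (hCε : 2 * C * ε * ρ ^ 2 ≤ κ) (hE : 0 < E) (hE1 : E ≤ 1)
    (hXY : X ^ 2 + Y ^ 2 ≤ ρ ^ 2) (hux : ux = 2 * α * ε * X * E) (huy : uy = 2 * α * ε * Y * E)
    (huxx : uxx ≤ -(ε * (4 * α ^ 2 * X ^ 2 - 2 * α) * E))
    (huyy : uyy ≤ -(ε * (4 * α ^ 2 * Y ^ 2 - 2 * α) * E)) :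
    a * uxx + c * ux ^ 2 + b * uyy + d * uy ^ 2 < 0 := by
  have hsecond : a * uxx + b * uyy ≤ -(ε * E * (4 * α ^ 2 * κ - 2 * α * Λ)) := by
    have h1 := mul_le_mul_of_nonneg_left huxx ha
    have h2 := mul_le_mul_of_nonneg_left huyy hb
    have h3 := mul_le_mul_of_nonneg_left hκ (by positivity : 0 ≤ ε * E * (4 * α ^ 2))
    have h4 := mul_le_mul_of_nonneg_left hab (by positivity : 0 ≤ ε * E * (2 * α))
    linarith
  have hgrad : ux ^ 2 + uy ^ 2 ≤ 4 * α ^ 2 * ε ^ 2 * E * ρ ^ 2 := by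
    have h1 : ux ^ 2 + uy ^ 2 = 4 * α ^ 2 * ε ^ 2 * E ^ 2 * (X ^ 2 + Y ^ 2) := by
      rw [hux, huy]; ring
    rw [h1]
    have h2 : E ^ 2 * (X ^ 2 + Y ^ 2) ≤ E * ρ ^ 2 :=
      mul_le_mul (by nlinarith) hXY (by positivity) hE.le
    nlinarith [mul_le_mul_of_nonneg_left h2 (by positivity : 0 ≤ 4 * α ^ 2 * ε ^ 2)]
  have hfirst : c * ux ^ 2 + d * uy ^ 2 ≤ 2 * α ^ 2 * ε * E * κ := by
    have h1 := mul_le_mul_of_nonneg_right hc (sq_nonneg ux)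
    have h2 := mul_le_mul_of_nonneg_right hd (sq_nonneg uy)
    have h3 := mul_le_mul_of_nonneg_left hgrad hC
    have h4 := mul_le_mul_of_nonneg_left hCε (by positivity : 0 ≤ 2 * α ^ 2 * ε * E)
    nlinarith
  have hpos : 0 < 2 * α * ε * E * (α * κ - Λ) := by
    have := sub_pos.2 hΛ; positivity
  nlinarith

section Hopf

variable {u : ℝ × ℝ → ℝ} {o z : ℝ × ℝ} {ρ₀ ρ α ε : ℝ}

lemma not_isLocalMax_add_hopfBarrier {a b c d C Λ κ : ℝ} (hu : ContDiffAt ℝ 2 u z)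
    (ha : 0 ≤ a) (hb : 0 ≤ b) (hab : a + b ≤ Λ) (hc : c ≤ C) (hd : d ≤ C)
    (hκ : κ ≤ a * (z.1 - o.1) ^ 2 + b * (z.2 - o.2) ^ 2)
    (hpde : a * pdx (pdx u) z + c * pdx u z ^ 2 + b * pdy (pdy u) z + d * pdy u z ^ 2 = 0)
    (hα : 0 < α) (hε : 0 < ε) (hC : 0 ≤ C) (hΛ : Λ < α * κ) (hCε : 2 * C * ε * ρ ^ 2 ≤ κ)
    (hz : sqDist o z ≤ ρ ^ 2) :
    ¬ IsLocalMax (fun p => u p + ε * hopfBarrier o α ρ p) z := by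
  intro hmax
  have hW : ContDiffAt ℝ 2 (fun p => ε * hopfBarrier o α ρ p) z :=
    contDiff_hopfBarrier.contDiffAt.const_smul ε
  obtain ⟨hx1, hx2⟩ := hmax.pdx_add_eq_zero_and_pdx_pdx_add_nonpos hu hW
  obtain ⟨hy1, hy2⟩ := hmax.pdy_add_eq_zero_and_pdy_pdy_add_nonpos hu hW
  simp only [pdx_const_mul, pdy_const_mul] at hx1 hx2 hy1 hy2
  rw [pdx_pdx_hopfBarrier] at hx2
  rw [pdy_pdy_hopfBarrier] at hy2
  rw [pdx_hopfBarrier] at hx1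
  rw [pdy_hopfBarrier] at hy1
  refine (hopf_barrier_operator_neg ha hb hab hc hd hκ hα hε hC hΛ hCε (exp_pos (-α * sqDist o z))
    (exp_le_one_iff.2 (by nlinarith [sqDist_nonneg o z])) hz ?_ ?_ ?_ ?_).ne hpde
  all_goals linarith

lemma add_hopfBarrier_le_of_forall_not_isLocalMax {M : ℝ}
    (hu : ContinuousOn u (annulus o ρ₀ ρ)) (hα : 0 ≤ α) (hε : 0 ≤ ε)
    (hle : ∀ p ∈ annulus o ρ₀ ρ, u p ≤ M)
    (hinner : ∀ p ∈ annulus o ρ₀ ρ, sqDist o p = ρ₀ ^ 2 → u p + ε ≤ M)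
    (hint : ∀ z, ρ₀ ^ 2 < sqDist o z → sqDist o z < ρ ^ 2 →
      ¬ IsLocalMax (fun p => u p + ε * hopfBarrier o α ρ p) z) :
    ∀ p ∈ annulus o ρ₀ ρ, u p + ε * hopfBarrier o α ρ p ≤ M := by
  intro p hp
  obtain ⟨z, hzK, hzmax⟩ := (isCompact_annulus o ρ₀ ρ).exists_isMaxOn
    (f := fun p => u p + ε * hopfBarrier o α ρ p) ⟨p, hp⟩
    (hu.add (continuousOn_const.mul (contDiff_hopfBarrier (n := 0)).continuous.continuousOn))
  refine (hzmax hp).trans (show u z + ε * hopfBarrier o α ρ z ≤ M from ?_)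
  rcases hzK.2.eq_or_lt with hout | hlt
  · rw [hopfBarrier_eq_zero hout, mul_zero, add_zero]
    exact hle z hzK
  rcases hzK.1.eq_or_lt with hin | hgt
  · linarith [hinner z hzK hin.symm, mul_le_of_le_one_right hε (hopfBarrier_le_one (o := o) (p := z)
      (ρ := ρ) hα)]
  refine absurd (hzmax.isLocalMax ?_) (hint z hgt hlt)
  filter_upwards [continuousAt_const.eventually_lt (continuous_sqDist o).continuousAt hgt,
    (continuous_sqDist o).continuousAt.eventually_lt continuousAt_const hlt] with p h1 h2
  exact ⟨h1.le, h2.le⟩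

theorem hopf_lemma_annulus {a b c d : ℝ × ℝ → ℝ} {V : Set (ℝ × ℝ)} {P μ : ℝ × ℝ}
    {M κ Λ C : ℝ} (hρ₀ : 0 ≤ ρ₀) (hρ : ρ₀ < ρ) (hV : IsOpen V) (hKV : annulus o ρ₀ ρ ⊆ V)
    (hu : ContDiffOn ℝ 2 u V) (hle : ∀ p ∈ annulus o ρ₀ ρ, u p ≤ M)
    (hinner : ∀ p ∈ annulus o ρ₀ ρ, sqDist o p = ρ₀ ^ 2 → u p < M) (hκ : 0 < κ)
    (hcoef : ∀ z, ρ₀ ^ 2 < sqDist o z → sqDist o z < ρ ^ 2 →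
      0 ≤ a z ∧ 0 ≤ b z ∧ a z + b z ≤ Λ ∧ c z ≤ C ∧ d z ≤ C ∧
      κ ≤ a z * (z.1 - o.1) ^ 2 + b z * (z.2 - o.2) ^ 2 ∧
      a z * pdx (pdx u) z + c z * pdx u z ^ 2 + b z * pdy (pdy u) z + d z * pdy u z ^ 2 = 0)
    (hP : sqDist o P = ρ ^ 2) (huP : u P = M)
    (hμ : 0 < μ.1 * (P.1 - o.1) + μ.2 * (P.2 - o.2)) :
    0 < μ.1 * pdx u P + μ.2 * pdy u P := by
  obtain ⟨ε₀, hε₀, hε₀le⟩ := ((isCompact_annulus o ρ₀ ρ).inter_right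
    (isClosed_eq (continuous_sqDist o) continuous_const)).exists_forall_le' (f := fun p => M - u p)
    (continuousOn_const.sub (hu.continuousOn.mono (inter_subset_left.trans hKV)))
    (fun p hp => sub_pos.2 (hinner p hp.1 hp.2))
  have hρ2 : 0 < ρ ^ 2 := by nlinarith
  set C' := max C 0
  set α := (|Λ| + 1) / κ
  have hα : 0 < α := by positivity
  have hακ : α * κ = |Λ| + 1 := div_mul_cancel₀ _ hκ.ne'
  set ε := min ε₀ (κ / (2 * (C' + 1) * ρ ^ 2))
  have hε : 0 < ε := lt_min hε₀ (by positivity)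
  have hεε₀ : ε ≤ ε₀ := min_le_left _ _
  have hCε : 2 * C' * ε * ρ ^ 2 ≤ κ := by
    have h := (le_div_iff₀ (by positivity)).1 (min_le_right ε₀ (κ / (2 * (C' + 1) * ρ ^ 2)))
    nlinarith [le_max_right C 0]
  have hmax := add_hopfBarrier_le_of_forall_not_isLocalMax (hu.continuousOn.mono hKV) hα.le
    hε.le hle (fun p hp hp0 => by linarith [hε₀le p ⟨hp, hp0⟩])
    fun z h1 h2 => by
      obtain ⟨ha, hb, hab, hc, hd, hκz, hpde⟩ := hcoef z h1 h2
      exact not_isLocalMax_add_hopfBarrier (hu.contDiffAt (hV.mem_nhds (hKV ⟨h1.le, h2.le⟩)))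
        ha hb hab (hc.trans (le_max_left C 0)) (hd.trans (le_max_left C 0)) hκz hpde hα hε
        (le_max_right C 0) (by linarith [le_abs_self Λ]) hCε h2.le
  have hPV : P ∈ V := hKV ⟨hP ▸ pow_le_pow_left₀ hρ₀ hρ.le 2, hP.le⟩
  have hW : DifferentiableAt ℝ (hopfBarrier o α ρ) P :=
    (contDiff_hopfBarrier (n := 1)).differentiable one_ne_zero P
  have hderiv := (hasDerivAt_comp_add_smul ((hu.contDiffAt (hV.mem_nhds hPV)).differentiableAt
    (by norm_num)) μ).add ((hasDerivAt_comp_add_smul hW μ).const_mul ε)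
  have h0 := hderiv.nonneg_of_eventually_le_left (by
    filter_upwards [eventually_add_smul_mem_annulus hρ₀ hρ hP hμ] with t ht
    simpa [huP, hopfBarrier_eq_zero hP] using hmax _ ht)
  simp only [pdx_hopfBarrier, pdy_hopfBarrier, hP] at h0
  nlinarith [mul_pos (mul_pos (mul_pos hα hε) (exp_pos (-α * ρ ^ 2))) hμ]

end Hopf

lemma min_le_mul_sq_add_mul_sq {a b X Y l β c₀ ρ₀ : ℝ} (ha : 0 ≤ a) (hb : β ≤ b) (hβ : 0 ≤ β)
    (hl : 0 ≤ l) (hc₀ : 0 ≤ c₀) (hstrip : |Y| ≤ c₀ → l ≤ a) (hXY : ρ₀ ^ 2 ≤ X ^ 2 + Y ^ 2) :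
    min (l * (ρ₀ ^ 2 - c₀ ^ 2)) (β * c₀ ^ 2) ≤ a * X ^ 2 + b * Y ^ 2 := by
  have hbY : β * Y ^ 2 ≤ b * Y ^ 2 := mul_le_mul_of_nonneg_right hb (sq_nonneg Y)
  by_cases hY : |Y| ≤ c₀
  · have hY2 : Y ^ 2 ≤ c₀ ^ 2 := by rw [← sq_abs]; exact pow_le_pow_left₀ (abs_nonneg Y) hY 2
    have h1 : l * (ρ₀ ^ 2 - c₀ ^ 2) ≤ l * X ^ 2 := mul_le_mul_of_nonneg_left (by linarith) hl
    have h2 : l * X ^ 2 ≤ a * X ^ 2 := mul_le_mul_of_nonneg_right (hstrip hY) (sq_nonneg X)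
    nlinarith [min_le_left (l * (ρ₀ ^ 2 - c₀ ^ 2)) (β * c₀ ^ 2), sq_nonneg Y]
  · have hY2 : c₀ ^ 2 ≤ Y ^ 2 := by
      rw [← sq_abs Y]; exact pow_le_pow_left₀ hc₀ (not_le.1 hY).le 2
    nlinarith [min_le_right (l * (ρ₀ ^ 2 - c₀ ^ 2)) (β * c₀ ^ 2), mul_nonneg ha (sq_nonneg X),
      mul_le_mul_of_nonneg_left hY2 hβ]

theorem chaplygin_hopf_annulus {γ ρ₀ ρ : ℝ} {q : ℝ × ℝ → ℝ} {V : Set (ℝ × ℝ)} {o P μ : ℝ × ℝ}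
    (hγ : 1 < γ) (hρ₀ : 0 < ρ₀) (hρ : ρ₀ < ρ) (hV : IsOpen V) (hKV : annulus o ρ₀ ρ ⊆ V)
    (hq : ContDiffOn ℝ 2 q V)
    (hsub : ∀ p ∈ annulus o ρ₀ ρ, p ≠ P → 0 < q p ∧ q p < cstar γ)
    (hPDE : ∀ p ∈ annulus o ρ₀ ρ, p ≠ P → chap γ q p)
    (hP : sqDist o P = ρ ^ 2) (hson : q P = cstar γ) (hdir : P.2 ≠ o.2)
    (hμ : 0 < μ.1 * (P.1 - o.1) + μ.2 * (P.2 - o.2)) :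
    0 < μ.1 * pdx q P + μ.2 * pdy q P := by
  have hne : ∀ p, sqDist o p < ρ ^ 2 → p ≠ P := fun p hp h => (h ▸ hP ▸ hp).false
  have hqK : ∀ p ∈ annulus o ρ₀ ρ, 0 < q p ∧ q p ≤ cstar γ := by
    intro p hp
    rcases eq_or_ne p P with rfl | hpP
    · exact ⟨hson ▸ cstar_pos hγ, hson.le⟩
    · exact ⟨(hsub p hp hpP).1, (hsub p hp hpP).2.le⟩
  obtain ⟨δ, hδ, hδle⟩ := (isCompact_annulus o ρ₀ ρ).exists_forall_le'
    (hq.continuousOn.mono hKV) fun p hp => (hqK p hp).1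
  obtain ⟨Λ, C, β, hβ, hbounds⟩ := exists_bounds_dAfun_dBfun hγ hδ
  -- `dAfun` vanishes at the sonic speed, so it has a positive lower bound only on a horizontal
  -- strip about `o`, which misses `P`; off the strip `(p.2 - o.2) ^ 2` is bounded below instead.
  set c₀ := min (|P.2 - o.2| / 2) (ρ₀ / 2)
  have hc₀ : 0 < c₀ := lt_min (by have := abs_pos.2 (sub_ne_zero.2 hdir); positivity)
    (by positivity)
  have hstripP : ∀ p, |p.2 - o.2| ≤ c₀ → p ≠ P := by
    rintro p hp rfl
    have := abs_pos.2 (sub_ne_zero.2 hdir)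
    linarith [min_le_left (|p.2 - o.2| / 2) (ρ₀ / 2)]
  obtain ⟨l, hl, hlle⟩ := exists_pos_forall_le_dAfun hγ ((isCompact_annulus o ρ₀ ρ).inter_right
    (isClosed_le (f := fun p : ℝ × ℝ => |p.2 - o.2|) (by fun_prop) continuous_const))
    (hq.continuousOn.mono (inter_subset_left.trans hKV)) fun p hp => hsub p hp.1 (hstripP p hp.2)
  have hκ : 0 < min (l * (ρ₀ ^ 2 - c₀ ^ 2)) (β * c₀ ^ 2) := by
    have : c₀ < ρ₀ := (min_le_right _ _).trans_lt (by linarith)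
    have : 0 < ρ₀ ^ 2 - c₀ ^ 2 := by nlinarith
    exact lt_min (by positivity) (by positivity)
  refine hopf_lemma_annulus (a := fun p => dAfun γ (q p)) (b := fun p => dBfun γ (q p))
    (c := fun p => deriv (dAfun γ) (q p)) (d := fun p => deriv (dBfun γ) (q p)) (Λ := Λ) (C := C)
    hρ₀.le hρ hV hKV hq (fun p hp => (hqK p hp).2)
    (fun p hp hp0 => (hsub p hp (hne p (hp0 ▸ pow_lt_pow_left₀ hρ hρ₀.le two_ne_zero))).2) hκ
    (fun z h1 h2 => ?_) hP hson hμ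
  have hzK : z ∈ annulus o ρ₀ ρ := ⟨h1.le, h2.le⟩
  obtain ⟨hq0, hqc⟩ := hsub z hzK (hne z h2)
  obtain ⟨hab, hc, hd, hβz⟩ := hbounds (q z) ⟨hδle z hzK, hqc.le⟩
  have ha := dAfun_pos hγ ⟨hq0, hqc⟩
  exact ⟨ha.le, hβ.le.trans hβz, hab, hc, hd,
    min_le_mul_sq_add_mul_sq ha.le hβz hβ.le hl.le hc₀.le (fun hY => hlle z ⟨hzK, hY⟩) h1.le,
    (chap_iff hγ (hq.contDiffAt (hV.mem_nhds (hKV hzK)))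
      ⟨hq0, hqc.trans (cstar_lt_qmaxF hγ)⟩).1 (hPDE z hzK (hne z h2))⟩

lemma mem_diskC_of_mem_annulus_midpoint {cen P p : ℝ × ℝ} {r ρ₀ : ℝ} (hP : sqDist cen P = r ^ 2)
    (hp : p ∈ annulus ((cen.1 + P.1) / 2, (cen.2 + P.2) / 2) ρ₀ (r / 2)) (hpP : p ≠ P) :
    p ∈ diskC cen r := by
  have h := sqDist_add_sqDist_eq cen P p
  have := sqDist_pos_of_ne hpP.symm
  show sqDist cen p < r ^ 2
  nlinarith [hp.2]

lemma mem_closure_diskC {cen P : ℝ × ℝ} {r : ℝ} (hr : 0 < r) (hP : sqDist cen P = r ^ 2) :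
    P ∈ closure (diskC cen r) := by
  set o : ℝ × ℝ := ((cen.1 + P.1) / 2, (cen.2 + P.2) / 2)
  have hoP : sqDist o P = (r / 2) ^ 2 := by
    rw [div_pow, ← hP]; simp only [sqDist, o]; ring
  have hPo : P - o ≠ 0 := sub_ne_zero.2 fun h => by
    rw [h, sqDist, sub_self, sub_self] at hoP; nlinarith
  have hμ : 0 < (P - o).1 * (P.1 - o.1) + (P - o).2 * (P.2 - o.2) := by
    have : 0 < sqDist o P := by rw [hoP]; positivity
    simpa [sqDist, sq] using this
  refine mem_closure_of_tendsto (f := fun t : ℝ => P + t • (P - o)) (b := 𝓝[<] 0)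
    (((by fun_prop : Continuous fun t : ℝ => P + t • (P - o)).tendsto' 0 P (by simp)).mono_left
      nhdsWithin_le_nhds) ?_
  filter_upwards [eventually_add_smul_mem_annulus (ρ₀ := r / 4) (by positivity) (by linarith)
    hoP hμ, self_mem_nhdsWithin] with t ht (htneg : t < 0)
  refine mem_diskC_of_mem_annulus_midpoint hP ht fun h => ?_
  rw [add_eq_left, smul_eq_zero] at h
  exact h.elim htneg.ne hPo

theorem stmt_10_general (γ : ℝ) (hγ : 1 < γ)
    (r : ℝ) (hr : 0 < r) (cen : ℝ × ℝ)
    (V : Set (ℝ × ℝ)) (hV : IsOpen V)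
    (hDV : closure (diskC cen r) ⊆ V)
    (q : ℝ × ℝ → ℝ) (hq : ContDiffOn ℝ 2 q V)
    (hsub : ∀ p ∈ diskC cen r, 0 < q p ∧ q p < cstar γ)
    (hPDE : ∀ p ∈ diskC cen r, chap γ q p)
    (P : ℝ × ℝ) (hP : (P.1 - cen.1) ^ 2 + (P.2 - cen.2) ^ 2 = r ^ 2)
    (hson : q P = cstar γ)
    (hdir : P.2 ≠ cen.2)
    (μ : ℝ × ℝ)
    (hacute : 0 < μ.1 * (P.1 - cen.1) + μ.2 * (P.2 - cen.2)) :
    0 < μ.1 * pdx q P + μ.2 * pdy q P := by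
  -- the disk of radius `r / 2` about `o` is internally tangent to `diskC cen r` at `P`
  set o : ℝ × ℝ := ((cen.1 + P.1) / 2, (cen.2 + P.2) / 2)
  have hKD : ∀ p ∈ annulus o (r / 4) (r / 2), p ≠ P → p ∈ diskC cen r :=
    fun p hp hpP => mem_diskC_of_mem_annulus_midpoint hP hp hpP
  have hKV : annulus o (r / 4) (r / 2) ⊆ V := fun p hp => by
    rcases eq_or_ne p P with rfl | hpP
    exacts [hDV (mem_closure_diskC hr hP), hDV (subset_closure (hKD p hp hpP))]
  refine chaplygin_hopf_annulus hγ (by positivity) (by linarith) hV hKV hq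
    (fun p hp hpP => hsub p (hKD p hp hpP)) (fun p hp hpP => hPDE p (hKD p hp hpP)) ?_ hson
    (fun h => hdir (by simp only [o] at h; linarith)) (by simp only [o]; linarith)
  simp only [sqDist, o]
  linear_combination hP / 4

/-- Hopf-type boundary point lemma at a sonic point on the boundary
of a subsonic disk (Lemma `WWlemma`). -/
theorem stmt_10 (γ : ℝ) (hγ : 1 < γ)
    (r : ℝ) (hr : 0 < r) (cen : ℝ × ℝ)
    (V : Set (ℝ × ℝ)) (hV : IsOpen V)
    (hDV : closure (diskC cen r) ⊆ V)
    (q : ℝ × ℝ → ℝ) (hq : ContDiffOn ℝ 2 q V)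
    (hsub : ∀ p ∈ diskC cen r, 0 < q p ∧ q p < cstar γ)
    (hPDE : ∀ p ∈ diskC cen r, chap γ q p)
    (P : ℝ × ℝ) (hP : (P.1 - cen.1) ^ 2 + (P.2 - cen.2) ^ 2 = r ^ 2)
    (hson : q P = cstar γ)
    (hdir : P.2 ≠ cen.2)
    (μ : ℝ × ℝ) (hunit : μ.1 ^ 2 + μ.2 ^ 2 = 1)
    (hacute : 0 < μ.1 * (P.1 - cen.1) + μ.2 * (P.2 - cen.2)) :
    0 < μ.1 * pdx q P + μ.2 * pdy q P :=
  stmt_10_general γ hγ r hr cen V hV hDV q hq hsub hPDE P hP hson hdir μ hacute
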